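/- arXiv:1711.11104 — 3 statements merged into one kernel-verified Lean document; each statement's English description precedes it below -/
import Mathlib

section
/- Let d : C → C be a k-derivation. Then there exists a k-derivation D : B → B such that p ∘ D ∘ q = d if and only if there exists a k-linear map α : E → E such that for all x ∈ E and c ∈ C one has (C1) x·d(c) = α(x)·c − α(x·c) and (C2) d(c)·x = c·α(x) − α(c·x). -/
/-!
The Leibniz rule for a lift `D` of `d`, applied to `inr x * inl c = inr (x • c)` and
`inl c * inr x = inr (c • x)`, says exactly that the `E → E` block `β = snd ∘ D ∘ inr` of `D`
satisfies (C1) and (C2) with `α = -β`. Conversely, as `E * E = 0` in `C ⋉ E`, the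
block-diagonal map `d ⊕ β` is a derivation as soon as `β` satisfies these two identities.
-/

open MulOpposite

local notation "tsze" => TrivSqZeroExt

namespace TrivSqZeroExt

variable {k C E : Type*} [Semiring k] [Semiring C] [Module k C] [AddCommGroup E] [Module k E]

def sndBlock (D : tsze C E →ₗ[k] tsze C E) : E →ₗ[k] E where
  toFun x := (D (inr x)).snd
  map_add' x y := by rw [inr_add, map_add, snd_add]
  map_smul' r x := by rw [inr_smul, map_smul, snd_smul, RingHom.id_apply]

@[simp]
theorem sndBlock_apply (D : tsze C E →ₗ[k] tsze C E) (x : E) :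
    sndBlock D x = (D (inr x)).snd := rfl

def blockDiag (d : C →ₗ[k] C) (β : E →ₗ[k] E) : tsze C E →ₗ[k] tsze C E :=
  d.prodMap β

theorem fst_blockDiag (d : C →ₗ[k] C) (β : E →ₗ[k] E) (b : tsze C E) :
    (blockDiag d β b).fst = d b.fst := rfl

theorem snd_blockDiag (d : C →ₗ[k] C) (β : E →ₗ[k] E) (b : tsze C E) :
    (blockDiag d β b).snd = β b.snd := rfl

variable [Module C E] [Module Cᵐᵒᵖ E]

section Leibniz

variable {D : tsze C E →ₗ[k] tsze C E} (hD : ∀ a b : tsze C E, D (a * b) = a * D b + D a * b)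
include hD

theorem snd_apply_inr_op_smul (x : E) (c : C) :
    (D (inr (op c • x))).snd = op (D (inl c)).fst • x + op c • (D (inr x)).snd := by
  have h := congrArg snd (hD (inr x) (inl c))
  rwa [inr_mul_inl, snd_add, snd_mul, snd_mul, fst_inr, snd_inl, fst_inl, snd_inr,
    zero_smul, zero_add, smul_zero, zero_add] at h

theorem snd_apply_inr_smul (x : E) (c : C) :
    (D (inr (c • x))).snd = c • (D (inr x)).snd + (D (inl c)).fst • x := by
  have h := congrArg snd (hD (inl c) (inr x))
  rwa [inl_mul_inr, snd_add, snd_mul, snd_mul, fst_inr, snd_inl, fst_inl, snd_inr,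
    op_zero, zero_smul, add_zero, smul_zero, add_zero] at h

end Leibniz

theorem blockDiag_mul {d : C →ₗ[k] C} {β : E →ₗ[k] E}
    (hd : ∀ a b : C, d (a * b) = a * d b + d a * b)
    (hβ_op : ∀ (x : E) (c : C), β (op c • x) = op (d c) • x + op c • β x)
    (hβ : ∀ (x : E) (c : C), β (c • x) = c • β x + d c • x) (a b : tsze C E) :
    blockDiag d β (a * b) = a * blockDiag d β b + blockDiag d β a * b := by
  ext
  · simp only [fst_blockDiag, fst_add, fst_mul, hd]
  · simp only [snd_blockDiag, fst_blockDiag, snd_add, snd_mul, map_add, hβ_op, hβ]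
    abel

end TrivSqZeroExt

open TrivSqZeroExt in
theorem hochschild_projection_lift_criterion_general
    (k C E : Type*) [Field k] [Ring C] [Algebra k C]
    [AddCommGroup E] [Module k E] [Module C E] [Module Cᵐᵒᵖ E]
    (d : C →ₗ[k] C) (hd : ∀ a b : C, d (a * b) = a * d b + d a * b) :
    (∃ D : TrivSqZeroExt C E →ₗ[k] TrivSqZeroExt C E,
        (∀ a b : TrivSqZeroExt C E, D (a * b) = a * D b + D a * b) ∧
        ∀ c : C, (D (TrivSqZeroExt.inl c)).fst = d c) ↔
      (∃ α : E →ₗ[k] E,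
        (∀ (x : E) (c : C),
            MulOpposite.op (d c) • x = MulOpposite.op c • α x - α (MulOpposite.op c • x)) ∧
        (∀ (x : E) (c : C), d c • x = c • α x - α (c • x))) := by
  constructor
  · rintro ⟨D, hD, hDd⟩
    refine ⟨-sndBlock D, fun x c => ?_, fun x c => ?_⟩
    · rw [LinearMap.neg_apply, LinearMap.neg_apply, sndBlock_apply, sndBlock_apply,
        snd_apply_inr_op_smul hD, hDd, smul_neg]
      abel
    · rw [LinearMap.neg_apply, LinearMap.neg_apply, sndBlock_apply, sndBlock_apply,
        snd_apply_inr_smul hD, hDd, smul_neg]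
      abel
  · rintro ⟨α, h₁, h₂⟩
    refine ⟨blockDiag d (-α), blockDiag_mul hd (fun x c => ?_) (fun x c => ?_),
      fun c => fst_blockDiag d (-α) (inl c)⟩
    · rw [LinearMap.neg_apply, LinearMap.neg_apply, h₁, smul_neg]
      abel
    · rw [LinearMap.neg_apply, LinearMap.neg_apply, h₂, smul_neg]
      abel

/-- **Lemma 2.3** (criterion for surjectivity of the first Hochschild projection morphism,
at the level of derivations): a `k`-derivation `d : C → C` lifts to a `k`-derivation
`D` of the trivial extension `B = C ⋉ E` with `p ∘ D ∘ q = d` if and only if there is a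
`k`-linear map `α : E → E` satisfying
(C1) `x·d(c) = α(x)·c − α(x·c)` and (C2) `d(c)·x = c·α(x) − α(c·x)` for all `x ∈ E`, `c ∈ C`. -/
theorem hochschild_projection_lift_criterion
    (k C E : Type*) [Field k] [Ring C] [Algebra k C]
    [AddCommGroup E] [Module k E] [Module C E] [Module Cᵐᵒᵖ E]
    [SMulCommClass C Cᵐᵒᵖ E] [IsScalarTower k C E] [IsScalarTower k Cᵐᵒᵖ E]
    (d : C →ₗ[k] C) (hd : ∀ a b : C, d (a * b) = a * d b + d a * b) :
    (∃ D : TrivSqZeroExt C E →ₗ[k] TrivSqZeroExt C E,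
        (∀ a b : TrivSqZeroExt C E, D (a * b) = a * D b + D a * b) ∧
        ∀ c : C, (D (TrivSqZeroExt.inl c)).fst = d c) ↔
      (∃ α : E →ₗ[k] E,
        (∀ (x : E) (c : C),
            MulOpposite.op (d c) • x = MulOpposite.op c • α x - α (MulOpposite.op c • x)) ∧
        (∀ (x : E) (c : C), d c • x = c • α x - α (c • x))) :=
  hochschild_projection_lift_criterion_general k C E d hd
end

section
/- Let E', E'' be sub-bimodules of E with E = E' ⊕ E'' (internal direct sum of C-C-bimodules). Suppose that every k-derivation d : C → C lifts to the trivial extension C ⋉ E, i.e., there exists a k-derivation D : C ⋉ E → C ⋉ E with p ∘ D ∘ q = d. Then every k-derivation d : C → C lifts to the trivial extension C ⋉ E', i.e., there exists a k-derivation D' : C ⋉ E' → C ⋉ E' with p' ∘ D' ∘ q' = d, where p', q' are the canonical projection and inclusion for C ⋉ E'. -/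
/-!
`C ⋉ E'` is a retract of `C ⋉ (E' × E'')` through the algebra maps induced by the inclusion and
the projection of the summand `E'`, and conjugating a derivation by a retraction of algebras gives
a derivation. Both maps restrict to the identity on `C`, so the conjugated lift still lifts `d`.
-/

namespace TrivSqZeroExt

variable (k : Type*) {C M N : Type*} [CommSemiring k] [Semiring C] [Algebra k C]
  [AddCommMonoid M] [Module k M] [Module C M] [Module Cᵐᵒᵖ M] [SMulCommClass C Cᵐᵒᵖ M]
  [IsScalarTower k C M] [IsScalarTower k Cᵐᵒᵖ M]
  [AddCommMonoid N] [Module k N] [Module C N] [Module Cᵐᵒᵖ N] [SMulCommClass C Cᵐᵒᵖ N]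
  [IsScalarTower k C N] [IsScalarTower k Cᵐᵒᵖ N]
  (f : M →ₗ[C] N) (hf : ∀ (c : Cᵐᵒᵖ) (x : M), f (c • x) = c • f x)

/-- The algebra map `C ⋉ M → C ⋉ N` induced by a bimodule map `f : M → N`. -/
def mapBimodule : TrivSqZeroExt C M →ₐ[k] TrivSqZeroExt C N where
  toFun x := inl x.fst + inr (f x.snd)
  map_one' := by ext <;> simp
  map_mul' x y := by ext <;> simp [hf]
  map_zero' := by ext <;> simp
  map_add' x y := by ext <;> simp
  commutes' r := by ext <;> simp [algebraMap_eq_inl']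

@[simp]
theorem fst_mapBimodule (x : TrivSqZeroExt C M) : (mapBimodule k f hf x).fst = x.fst := by
  simp [mapBimodule]

@[simp]
theorem snd_mapBimodule (x : TrivSqZeroExt C M) : (mapBimodule k f hf x).snd = f x.snd := by
  simp [mapBimodule]

@[simp]
theorem mapBimodule_inl (c : C) : mapBimodule k f hf (inl c) = inl c := by
  ext <;> simp

theorem mapBimodule_leftInverse {g : N →ₗ[C] M}
    (hg : ∀ (c : Cᵐᵒᵖ) (y : N), g (c • y) = c • g y)
    (hgf : Function.LeftInverse g f) :
    Function.LeftInverse (mapBimodule k g hg) (mapBimodule k f hf) := fun x => by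
  ext <;> simp [hgf _]

end TrivSqZeroExt

theorem leibniz_of_retract {k A B : Type*} [CommSemiring k] [Semiring A] [Semiring B]
    [Algebra k A] [Algebra k B] (ι : A →ₐ[k] B) (π : B →ₐ[k] A)
    (hπι : Function.LeftInverse π ι) (D : B →ₗ[k] B)
    (hD : ∀ a b, D (a * b) = a * D b + D a * b) (a b : A) :
    (π.toLinearMap ∘ₗ D ∘ₗ ι.toLinearMap) (a * b) =
      a * (π.toLinearMap ∘ₗ D ∘ₗ ι.toLinearMap) b +
        (π.toLinearMap ∘ₗ D ∘ₗ ι.toLinearMap) a * b := by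
  simp only [LinearMap.comp_apply, AlgHom.toLinearMap_apply, map_mul, hD, map_add, hπι _]

/-- **Lemma 2.4** at the level of derivations: if `E = E' ⊕ E''` is a direct sum of
`C`-`C`-bimodules (formalized as the external direct sum `E' × E''`) and every
`k`-derivation of `C` lifts to a `k`-derivation of the trivial extension `C ⋉ E`
(through the canonical projection `p` and inclusion `q`), then every `k`-derivation of
`C` lifts to a `k`-derivation of the partial extension `C ⋉ E'`. -/
theorem derivations_lift_to_partial_extension
    (k C E' E'' : Type*) [Field k] [Ring C] [Algebra k C]
    [AddCommGroup E'] [Module k E'] [Module C E'] [Module Cᵐᵒᵖ E']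
    [SMulCommClass C Cᵐᵒᵖ E'] [IsScalarTower k C E'] [IsScalarTower k Cᵐᵒᵖ E']
    [AddCommGroup E''] [Module k E''] [Module C E''] [Module Cᵐᵒᵖ E'']
    [SMulCommClass C Cᵐᵒᵖ E''] [IsScalarTower k C E''] [IsScalarTower k Cᵐᵒᵖ E'']
    (hlift : ∀ d : C →ₗ[k] C, (∀ a b : C, d (a * b) = a * d b + d a * b) →
      ∃ D : TrivSqZeroExt C (E' × E'') →ₗ[k] TrivSqZeroExt C (E' × E''),
        (∀ a b : TrivSqZeroExt C (E' × E''), D (a * b) = a * D b + D a * b) ∧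
        ∀ c : C, (D (TrivSqZeroExt.inl c)).fst = d c) :
    ∀ d : C →ₗ[k] C, (∀ a b : C, d (a * b) = a * d b + d a * b) →
      ∃ D' : TrivSqZeroExt C E' →ₗ[k] TrivSqZeroExt C E',
        (∀ a b : TrivSqZeroExt C E', D' (a * b) = a * D' b + D' a * b) ∧
        ∀ c : C, (D' (TrivSqZeroExt.inl c)).fst = d c := by
  intro d hd
  obtain ⟨D, hD, hDq⟩ := hlift d hd
  have hinl : ∀ (c : Cᵐᵒᵖ) (x : E'),
      LinearMap.inl C E' E'' (c • x) = c • LinearMap.inl C E' E'' x := fun _ _ => by simp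
  have hfst : ∀ (c : Cᵐᵒᵖ) (y : E' × E''),
      LinearMap.fst C E' E'' (c • y) = c • LinearMap.fst C E' E'' y := fun _ _ => rfl
  let ι := TrivSqZeroExt.mapBimodule k _ hinl
  let π := TrivSqZeroExt.mapBimodule k _ hfst
  have hπι : Function.LeftInverse π ι :=
    TrivSqZeroExt.mapBimodule_leftInverse k _ hinl hfst fun _ => rfl
  refine ⟨π.toLinearMap ∘ₗ D ∘ₗ ι.toLinearMap, leibniz_of_retract ι π hπι D hD,
    fun c => ?_⟩
  simpa [ι, π] using hDq c
end

section
/- Let D : B → B be any k-derivation of the trivial extension B = C ⋉ E, and define g : E → C by g(x) = p(D(0,x)). Then g is a morphism of C-C-bimodules (g(c·x) = c·g(x) and g(x·c) = g(x)·c for all c ∈ C, x ∈ E) and satisfies x·g(y) + g(x)·y = 0 in E for all x, y ∈ E; that is, g belongs to 𝓔(E,C). -/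
/-!
Write `g x = (D (inr x)).fst`. The bimodule identities come from applying the Leibniz rule to
`inr (c • x) = inl c * inr x` and `inr (op c • x) = inr x * inl c` and taking first components:
the terms involving `D (inl c)` are multiplied by `inr x`, whose first component is zero. The
identity `x·g(y) + g(x)·y = 0` is the second component of the Leibniz rule applied to
`inr x * inr y = 0`.
-/

theorem apply_zero_of_leibniz {A : Type*} [NonUnitalNonAssocSemiring A] {D : A → A}
    (hD : ∀ a b : A, D (a * b) = a * D b + D a * b) : D 0 = 0 := by
  simpa using hD 0 0

namespace TrivSqZeroExt

def fstCompInr {S R M : Type*} [CommSemiring S] [Semiring R] [AddCommMonoid M] [Module S R]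
    [Module S M] (D : TrivSqZeroExt R M →ₗ[S] TrivSqZeroExt R M) : M →ₗ[S] R where
  toFun x := (D (inr x)).fst
  map_add' x y := by rw [inr_add, map_add, fst_add]
  map_smul' r x := by rw [inr_smul, map_smul, fst_smul]; rfl

section Leibniz

variable {R M : Type*} [Semiring R] [AddCommMonoid M] [Module R M] [Module Rᵐᵒᵖ M]
  {D : TrivSqZeroExt R M → TrivSqZeroExt R M} (hD : ∀ a b : TrivSqZeroExt R M, D (a * b) = a * D b + D a * b)
include hD

theorem fst_apply_inr_smul (c : R) (x : M) :
    (D (inr (c • x))).fst = c * (D (inr x)).fst := by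
  rw [← inl_mul_inr, hD, fst_add, fst_mul, fst_mul, fst_inl, fst_inr, mul_zero, add_zero]

theorem fst_apply_inr_op_smul (c : R) (x : M) :
    (D (inr (MulOpposite.op c • x))).fst = (D (inr x)).fst * c := by
  rw [← inr_mul_inl, hD, fst_add, fst_mul, fst_mul, fst_inl, fst_inr, zero_mul, zero_add]

theorem op_fst_apply_inr_smul_add_fst_apply_inr_smul_eq_zero (x y : M) :
    MulOpposite.op (D (inr y)).fst • x + (D (inr x)).fst • y = 0 := by
  have h := congrArg snd (hD (inr x) (inr y))
  rw [inr_mul_inr, apply_zero_of_leibniz hD, snd_add, snd_mul, snd_mul] at h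
  simpa using h.symm

end Leibniz

end TrivSqZeroExt

open TrivSqZeroExt in
theorem derivation_gives_bimodule_map_general
    (k C E : Type*) [Field k] [Ring C] [Algebra k C]
    [AddCommGroup E] [Module k E] [Module C E] [Module Cᵐᵒᵖ E]
    (D : TrivSqZeroExt C E →ₗ[k] TrivSqZeroExt C E)
    (hD : ∀ a b : TrivSqZeroExt C E, D (a * b) = a * D b + D a * b) :
    ∃ g : E →ₗ[k] C,
      (∀ x : E, g x = (D (TrivSqZeroExt.inr x)).fst) ∧
      (∀ (c : C) (x : E), g (c • x) = c * g x) ∧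
      (∀ (c : C) (x : E), g (MulOpposite.op c • x) = g x * c) ∧
      (∀ x y : E, MulOpposite.op (g y) • x + g x • y = 0) :=
  ⟨fstCompInr D, fun _ => rfl, fst_apply_inr_smul hD, fst_apply_inr_op_smul hD,
    op_fst_apply_inr_smul_add_fst_apply_inr_smul_eq_zero hD⟩

/-- For any `k`-derivation `D : B → B` of the trivial extension `B = C ⋉ E`, the map
`g : E → C` defined by `g(x) = p(D(0,x))` is a morphism of `C`-`C`-bimodules and
satisfies `x·g(y) + g(x)·y = 0` in `E` for all `x, y ∈ E`; that is, `g ∈ 𝓔(E,C)`. -/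
theorem derivation_gives_bimodule_map
    (k C E : Type*) [Field k] [Ring C] [Algebra k C]
    [AddCommGroup E] [Module k E] [Module C E] [Module Cᵐᵒᵖ E]
    [SMulCommClass C Cᵐᵒᵖ E] [IsScalarTower k C E] [IsScalarTower k Cᵐᵒᵖ E]
    (D : TrivSqZeroExt C E →ₗ[k] TrivSqZeroExt C E)
    (hD : ∀ a b : TrivSqZeroExt C E, D (a * b) = a * D b + D a * b) :
    ∃ g : E →ₗ[k] C,
      (∀ x : E, g x = (D (TrivSqZeroExt.inr x)).fst) ∧
      (∀ (c : C) (x : E), g (c • x) = c * g x) ∧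
      (∀ (c : C) (x : E), g (MulOpposite.op c • x) = g x * c) ∧
      (∀ x y : E, MulOpposite.op (g y) • x + g x • y = 0) :=
  derivation_gives_bimodule_map_general k C E D hD
end
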